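/- There are precisely seven Euclidean consonant musical intervals, namely the minor third [5/6], the major third [4/5], the fourth [3/4], the fifth [2/3], the minor sixth [5/8], the major sixth [3/5], and the octave [1/2]. That is, the set of Euclidean consonants equals {[5/6], [4/5], [3/4], [2/3], [5/8], [3/5], [1/2]} ⊂ 𝔖. -/

import Mathlib

/-- The positive rational numbers ℚ₊. -/
abbrev Qpos := {q : ℚ // 0 < q}

/-- Octave equivalence on ℚ₊: `q₁ ∼ q₂` iff `q₁ = 2^n * q₂` for some `n ∈ ℤ`. -/
def octaveRel (q₁ q₂ : Qpos) : Prop := ∃ n : ℤ, (q₁ : ℚ) = 2 ^ n * (q₂ : ℚ)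

/-- The group of musical intervals `𝔖 = ℚ₊/∼`. -/
def MusInt := Quot octaveRel

/-- The musical interval `[q]` represented by a positive rational `q`. -/
def cls (q : ℚ) (h : 0 < q) : MusInt := Quot.mk octaveRel ⟨q, h⟩

/-- The octave `𝔬 = [1/2]`. -/
def octave : MusInt := cls (1/2) (by norm_num)

/-- `repSpec σ (m, n)` says that `(m, n)` is a reduced representative of `σ`,
i.e. `σ = [m/n]`, `1/2 ≤ m/n < 1` and `gcd(n, m) = 1`. -/
def repSpec (σ : MusInt) (p : ℕ × ℕ) : Prop :=
  ∃ h : (0 : ℚ) < (p.1 : ℚ) / (p.2 : ℚ),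
    σ = cls ((p.1 : ℚ) / (p.2 : ℚ)) h ∧
    (1 : ℚ) / 2 ≤ (p.1 : ℚ) / (p.2 : ℚ) ∧ (p.1 : ℚ) / (p.2 : ℚ) < 1 ∧
    Nat.gcd p.2 p.1 = 1

open Classical in
/-- The canonical reduced representative `(m_σ, n_σ)` of a musical interval. -/
noncomputable def rep (σ : MusInt) : ℕ × ℕ :=
  if h : ∃ p, repSpec σ p then h.choose else (1, 2)

/-- The numerator `m_σ`, so that `σ = [m_σ/n_σ]`. -/
noncomputable def mVal (σ : MusInt) : ℕ := (rep σ).1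

/-- The map `𝒩`, sending `σ` to the denominator `n_σ`, so that `σ = [m_σ/n_σ]`. -/
noncomputable def nVal (σ : MusInt) : ℕ := (rep σ).2

/-- The Kepler map `K(σ) = [(n_σ - m_σ)/m_σ]`. -/
noncomputable def kepler (σ : MusInt) : MusInt :=
  if h : (0 : ℚ) < ((nVal σ : ℚ) - (mVal σ : ℚ)) / (mVal σ : ℚ) then
    cls (((nVal σ : ℚ) - (mVal σ : ℚ)) / (mVal σ : ℚ)) h
  else octave

/-- The height `𝔥(σ) = min {ℓ ∈ ℕ₀ : K^ℓ(σ) = 𝔬}`. -/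
noncomputable def height (σ : MusInt) : ℕ := sInf {ℓ : ℕ | kepler^[ℓ] σ = octave}

/-- `n` is an Euclidean Gauss–Wantzel number: `n = 2^k * 3^l * 5^m` with
`l, m ∈ {0, 1}` and `n > 1`. -/
def IsEuclidean (n : ℕ) : Prop :=
  1 < n ∧ ∃ k l m : ℕ, (l = 0 ∨ l = 1) ∧ (m = 0 ∨ m = 1) ∧ n = 2 ^ k * 3 ^ l * 5 ^ m

/-- `p` is a Fermat prime: a prime of the form `2^(2^n) + 1`. -/
def IsFermatPrime (p : ℕ) : Prop := p.Prime ∧ ∃ n : ℕ, p = 2 ^ (2 ^ n) + 1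

/-- `n` is a Gauss–Wantzel number: `n > 1` is a power of `2` times a product of
distinct Fermat primes. -/
def IsGaussWantzel (n : ℕ) : Prop :=
  1 < n ∧ ∃ (k : ℕ) (s : Finset ℕ), (∀ p ∈ s, IsFermatPrime p) ∧ n = 2 ^ k * ∏ p ∈ s, p

/-- `σ` is Euclidean consonant: all members of its second Kepler sequence are
Euclidean Gauss–Wantzel numbers. -/
def EuclideanConsonant (σ : MusInt) : Prop :=
  ∀ j ≤ height σ, IsEuclidean (nVal (kepler^[j] σ))

/-- `σ` is Gaussian consonant: all members of its second Kepler sequence are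
Gauss–Wantzel numbers. -/
def GaussianConsonant (σ : MusInt) : Prop :=
  ∀ j ≤ height σ, IsGaussWantzel (nVal (kepler^[j] σ))

/-!
Write `σ = [m/n]` in lowest terms with `1/2 ≤ m/n < 1`. Away from the octave, `n < 2m`, so
`K σ = [(n - m)/m]` with `0 < n - m < m` coprime to `m`. As `(n - m)/m` is already reduced,
bringing it into `[1/2, 1)` by a power of two changes its denominator only by a power of two:
`m = 2^s · 𝒩(K σ)`. Since Euclidean Gauss–Wantzel numbers are closed under doubling, for a
Euclidean consonant both `m` and `n` are such numbers. Being coprime, one of them is odd and so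
divides `15`, which leaves the eight pairs `(m, n)` of the seven consonants together with
`[8/15]` and `[15/16]`. These two are not consonant: `K [8/15] = [7/8]` has numerator `7`, and
`K [15/16] = [8/15]`.
-/

open Set

lemma octaveRel_equivalence : Equivalence octaveRel where
  refl _ := ⟨0, by simp⟩
  symm := by
    rintro _ _ ⟨n, h⟩
    exact ⟨-n, by rw [h, ← mul_assoc, ← zpow_add₀ two_ne_zero]; simp⟩
  trans := by
    rintro _ _ _ ⟨n, h⟩ ⟨n', h'⟩
    exact ⟨n + n', by rw [h, h', ← mul_assoc, ← zpow_add₀ two_ne_zero]⟩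

lemma cls_eq_cls_iff {q q' : ℚ} (h : 0 < q) (h' : 0 < q') :
    cls q h = cls q' h' ↔ ∃ n : ℤ, q = 2 ^ n * q' :=
  Quot.eq.trans octaveRel_equivalence.eqvGen_iff

lemma exists_mem_Ico_cls_eq {q : ℚ} (hq : 0 < q) :
    ∃ (r : ℚ) (hr : 0 < r), cls q hq = cls r hr ∧ r ∈ Ico (1 / 2) 1 := by
  obtain ⟨n, hn, hn'⟩ := exists_mem_Ico_zpow hq one_lt_two
  have h2n : (0 : ℚ) < 2 ^ (n + 1) := zpow_pos two_pos _
  refine ⟨q / 2 ^ (n + 1), div_pos hq h2n, (cls_eq_cls_iff _ _).2 ⟨n + 1, ?_⟩, ?_, ?_⟩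
  · field_simp
  · rw [le_div_iff₀ h2n, zpow_add_one₀ two_ne_zero]
    linarith
  · rwa [div_lt_one h2n]

lemma eq_of_cls_eq {q q' : ℚ} {h : 0 < q} {h' : 0 < q'} (hcls : cls q h = cls q' h')
    (hq : q ∈ Ico (1 / 2) 1) (hq' : q' ∈ Ico (1 / 2) 1) : q = q' := by
  obtain ⟨n, rfl⟩ := (cls_eq_cls_iff h h').1 hcls
  suffices n = 0 by simp [this]
  have h2n : (0 : ℚ) < 2 ^ n := zpow_pos two_pos n
  have hlt : (2 : ℚ) ^ n < 2 ^ (1 : ℤ) := by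
    rw [zpow_one]; nlinarith [hq.2, hq'.1]
  have hgt : (2 : ℚ) ^ (-1 : ℤ) < 2 ^ n := by
    rw [zpow_neg_one]; nlinarith [hq.1, hq'.2]
  have := (zpow_lt_zpow_iff_right₀ one_lt_two).1 hlt
  have := (zpow_lt_zpow_iff_right₀ one_lt_two).1 hgt
  omega

lemma cls_congr {q q' : ℚ} {h : 0 < q} {h' : 0 < q'} (hq : q = q') : cls q h = cls q' h' := by
  subst hq; rfl

lemma Nat.eq_and_eq_of_div_eq_div {m n m' n' : ℕ} (hn : 0 < n) (hn' : 0 < n')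
    (h : Nat.Coprime n m) (h' : Nat.Coprime n' m') (heq : (m : ℚ) / n = m' / n') :
    m = m' ∧ n = n' := by
  have heqℤ : ((m : ℤ) : ℚ) / ((n : ℤ) : ℚ) = ((m' : ℤ) : ℚ) / ((n' : ℤ) : ℚ) := by
    push_cast; exact heq
  have := Rat.div_int_inj (by exact_mod_cast hn) (by exact_mod_cast hn')
    (by simpa using h.symm) (by simpa using h'.symm) heqℤ
  omega

lemma repSpec_unique {σ : MusInt} {p p' : ℕ × ℕ} (h : repSpec σ p) (h' : repSpec σ p') :
    p = p' := by
  obtain ⟨hpos, hσ, hle, hlt, hcop⟩ := h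
  obtain ⟨hpos', hσ', hle', hlt', hcop'⟩ := h'
  have hq := eq_of_cls_eq (hσ.symm.trans hσ') ⟨hle, hlt⟩ ⟨hle', hlt'⟩
  have hn : 0 < p.2 := Nat.pos_of_ne_zero fun h0 => by simp [h0] at hpos
  have hn' : 0 < p'.2 := Nat.pos_of_ne_zero fun h0 => by simp [h0] at hpos'
  obtain ⟨h1, h2⟩ := Nat.eq_and_eq_of_div_eq_div hn hn' hcop hcop' hq
  exact Prod.ext h1 h2

lemma repSpec_cls {r : ℚ} (hr : 0 < r) (hmem : r ∈ Ico (1 / 2) 1) :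
    repSpec (cls r hr) (r.num.toNat, r.den) := by
  have hnum_nonneg : 0 ≤ r.num := (Rat.num_pos.2 hr).le
  have hval : ((r.num.toNat : ℕ) : ℚ) / r.den = r := by
    rw [show ((r.num.toNat : ℕ) : ℚ) = r.num by exact_mod_cast Int.toNat_of_nonneg hnum_nonneg,
      Rat.num_div_den]
  dsimp only [repSpec]
  refine ⟨by rw [hval]; exact hr, cls_congr hval.symm, by rw [hval]; exact hmem.1,
    by rw [hval]; exact hmem.2, ?_⟩
  rw [Nat.gcd_comm, show r.num.toNat = r.num.natAbs by omega]
  exact r.reduced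

lemma rep_spec (σ : MusInt) : repSpec σ (rep σ) := by
  have hex : ∃ p, repSpec σ p := by
    induction σ using Quot.ind with
    | mk q =>
      obtain ⟨r, hr, hqr, hmem⟩ := exists_mem_Ico_cls_eq q.2
      exact ⟨_, hqr ▸ repSpec_cls hr hmem⟩
  rw [rep, dif_pos hex]
  exact hex.choose_spec

lemma rep_eq_of_repSpec {σ : MusInt} {p : ℕ × ℕ} (h : repSpec σ p) : rep σ = p :=
  repSpec_unique (rep_spec σ) h

lemma rep_injective : Function.Injective rep := by
  intro σ τ hrep
  obtain ⟨h, hσ, -⟩ := rep_spec σ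
  obtain ⟨h', hτ, -⟩ := rep_spec τ
  exact hσ.trans ((cls_congr (by rw [hrep])).trans hτ.symm)

lemma rep_cls_eq {q : ℚ} (hq : 0 < q) {m n : ℕ} (hmn : m < n) (hn : n ≤ 2 * m)
    (hcop : Nat.Coprime n m) (h : ∃ a : ℤ, (m : ℚ) / n = 2 ^ a * q) : rep (cls q hq) = (m, n) := by
  have hnQ : (0 : ℚ) < n := by exact_mod_cast (by omega : 0 < n)
  have hnQ' : (n : ℚ) ≤ 2 * m := by exact_mod_cast hn
  have hmnQ : (m : ℚ) < n := by exact_mod_cast hmn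
  obtain ⟨a, ha⟩ := h
  refine rep_eq_of_repSpec ⟨div_pos (by exact_mod_cast (by omega : 0 < m)) hnQ,
    ((cls_eq_cls_iff _ _).2 ⟨-a, ?_⟩), ?_, ?_, hcop⟩
  · rw [ha, ← mul_assoc, ← zpow_add₀ two_ne_zero]; simp
  · rw [le_div_iff₀ hnQ]; linarith
  · rwa [div_lt_one hnQ]

lemma nVal_pos (σ : MusInt) : 0 < nVal σ :=
  Nat.pos_of_ne_zero fun h0 => by
    have := (rep_spec σ).1
    simp [nVal] at h0; simp [h0] at this

lemma mVal_lt_nVal (σ : MusInt) : mVal σ < nVal σ := by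
  obtain ⟨-, -, -, hlt, -⟩ := rep_spec σ
  exact_mod_cast (div_lt_one (Nat.cast_pos.2 (nVal_pos σ))).1 hlt

lemma nVal_le_two_mul_mVal (σ : MusInt) : nVal σ ≤ 2 * mVal σ := by
  obtain ⟨-, -, hle, -, -⟩ := rep_spec σ
  have := (le_div_iff₀ (Nat.cast_pos.2 (nVal_pos σ))).1 hle
  exact_mod_cast (by linarith : ((rep σ).2 : ℚ) ≤ 2 * (rep σ).1)

lemma mVal_pos (σ : MusInt) : 0 < mVal σ := by
  have := mVal_lt_nVal σ
  have := nVal_le_two_mul_mVal σ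
  omega

lemma coprime_nVal_mVal (σ : MusInt) : Nat.Coprime (nVal σ) (mVal σ) :=
  (rep_spec σ).2.2.2.2

lemma rep_octave : rep octave = (1, 2) :=
  rep_cls_eq _ one_lt_two le_rfl (by decide) ⟨0, by norm_num⟩

lemma nVal_lt_two_mul_mVal {σ : MusInt} (hσ : σ ≠ octave) : nVal σ < 2 * mVal σ := by
  refine (nVal_le_two_mul_mVal σ).lt_of_ne fun hn => hσ (rep_injective ?_)
  have hm : mVal σ = 1 :=
    (coprime_nVal_mVal σ).symm.eq_one_of_dvd ⟨2, by rw [hn, mul_comm]⟩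
  rw [rep_octave, ← hm, ← show 2 * mVal σ = 2 by omega, ← hn]
  rfl

lemma kepler_eq_cls (σ : MusInt) :
    ∃ h, kepler σ = cls (((nVal σ : ℚ) - mVal σ) / mVal σ) h := by
  have hm : (0 : ℚ) < mVal σ := by exact_mod_cast mVal_pos σ
  have hmn : (mVal σ : ℚ) < nVal σ := by exact_mod_cast mVal_lt_nVal σ
  have hpos : (0 : ℚ) < ((nVal σ : ℚ) - mVal σ) / mVal σ := div_pos (by linarith) hm
  exact ⟨hpos, dif_pos hpos⟩

lemma rep_kepler_eq {σ : MusInt} {m n u w : ℕ} (hrep : rep σ = (m, n)) (a : ℕ) (huw : u < w)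
    (hw : w ≤ 2 * u) (hcop : Nat.Coprime w u) (h : u * m = 2 ^ a * (n - m) * w) :
    rep (kepler σ) = (u, w) := by
  obtain ⟨_, hK⟩ := kepler_eq_cls σ
  have hm : mVal σ = m := congrArg Prod.fst hrep
  have hn : nVal σ = n := congrArg Prod.snd hrep
  have hmn : m < n := hm ▸ hn ▸ mVal_lt_nVal σ
  have hmQ : (0 : ℚ) < m := by exact_mod_cast hm ▸ mVal_pos σ
  rw [hK]
  refine rep_cls_eq _ huw hw hcop ⟨a, ?_⟩
  have hQ : (u : ℚ) * m = 2 ^ a * ((n : ℚ) - m) * w := by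
    have := congrArg (Nat.cast : ℕ → ℚ) h
    push_cast [Nat.cast_sub hmn.le] at this
    exact this
  have hwQ : (0 : ℚ) < w := by exact_mod_cast (by omega : 0 < w)
  rw [hm, hn, zpow_natCast, div_eq_iff hwQ.ne']
  field_simp
  linarith

lemma exists_eq_cls_mVal_div_nVal (σ : MusInt) : ∃ h, σ = cls ((mVal σ : ℚ) / nVal σ) h :=
  ⟨_, (rep_spec σ).2.1⟩

lemma Nat.exists_eq_two_pow_mul_of_coprime {d m u w b : ℕ} (hw : 0 < w) (hdm : Nat.Coprime d m)
    (huw : Nat.Coprime u w) (h : 2 ^ b * d * w = u * m) : ∃ s, m = 2 ^ s * w := by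
  obtain ⟨k, rfl⟩ : w ∣ m := huw.symm.dvd_of_dvd_mul_left ⟨2 ^ b * d, by rw [← h]; ring⟩
  have hk : w * k ∣ 2 ^ b * w :=
    hdm.symm.dvd_of_dvd_mul_right ⟨u, by rw [show 2 ^ b * w * d = 2 ^ b * d * w by ring, h]; ring⟩
  obtain ⟨s, -, rfl⟩ :=
    (Nat.dvd_prime_pow Nat.prime_two).1 (Nat.dvd_of_mul_dvd_mul_left hw (mul_comm w (2 ^ b) ▸ hk))
  exact ⟨s, mul_comm _ _⟩

lemma exists_mVal_eq_two_pow_mul_nVal_kepler {σ : MusInt} (hσ : σ ≠ octave) :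
    ∃ s, mVal σ = 2 ^ s * nVal (kepler σ) := by
  obtain ⟨_, hK⟩ := kepler_eq_cls σ
  obtain ⟨_, hK'⟩ := exists_eq_cls_mVal_div_nVal (kepler σ)
  obtain ⟨a, ha⟩ := (cls_eq_cls_iff _ _).1 (hK.symm.trans hK')
  have hmn := mVal_lt_nVal σ
  have hn2m : (nVal σ : ℚ) < 2 * mVal σ := by exact_mod_cast nVal_lt_two_mul_mVal hσ
  have hmQ : (0 : ℚ) < mVal σ := by exact_mod_cast mVal_pos σ
  have hwQ : (0 : ℚ) < nVal (kepler σ) := by exact_mod_cast nVal_pos (kepler σ)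
  have hw2u : (nVal (kepler σ) : ℚ) ≤ 2 * mVal (kepler σ) := by
    exact_mod_cast nVal_le_two_mul_mVal (kepler σ)
  have ha_nonpos : a ≤ 0 := by
    by_contra! ha_pos
    have h2a : (2 : ℚ) ≤ 2 ^ a := by
      simpa using zpow_le_zpow_right₀ one_le_two (show (1 : ℤ) ≤ a by omega)
    have hlt : ((nVal σ : ℚ) - mVal σ) / mVal σ < 1 := by
      rw [div_lt_one hmQ]; linarith
    have hge : 1 ≤ 2 ^ a * ((mVal (kepler σ) : ℚ) / nVal (kepler σ)) := by
      rw [← mul_div_assoc, le_div_iff₀ hwQ]; nlinarith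
    linarith
  obtain ⟨b, rfl⟩ := Int.exists_eq_neg_ofNat ha_nonpos
  refine Nat.exists_eq_two_pow_mul_of_coprime (d := nVal σ - mVal σ) (b := b) (nVal_pos _)
    ((Nat.coprime_sub_self_left hmn.le).2 (coprime_nVal_mVal σ)) (coprime_nVal_mVal _).symm ?_
  rw [zpow_neg, zpow_natCast, div_eq_iff hmQ.ne'] at ha
  have : (2 : ℚ) ^ b * ((nVal σ : ℚ) - mVal σ) * nVal (kepler σ)
      = mVal (kepler σ) * mVal σ := by
    rw [ha]; field_simp
  rw [← Nat.cast_sub hmn.le] at this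
  exact_mod_cast this

lemma nVal_kepler_lt {σ : MusInt} (hσ : σ ≠ octave) : nVal (kepler σ) < nVal σ := by
  obtain ⟨s, hs⟩ := exists_mVal_eq_two_pow_mul_nVal_kepler hσ
  calc nVal (kepler σ) ≤ 2 ^ s * nVal (kepler σ) := Nat.le_mul_of_pos_left _ (by positivity)
    _ = mVal σ := hs.symm
    _ < nVal σ := mVal_lt_nVal σ

lemma exists_iterate_kepler_eq_octave (σ : MusInt) : ∃ ℓ, kepler^[ℓ] σ = octave := by
  induction hN : nVal σ using Nat.strong_induction_on generalizing σ with
  | _ N ih =>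
    by_cases hσ : σ = octave
    · exact ⟨0, hσ⟩
    · obtain ⟨ℓ, hℓ⟩ := ih _ (hN ▸ nVal_kepler_lt hσ) (kepler σ) rfl
      exact ⟨ℓ + 1, hℓ⟩

lemma height_octave : height octave = 0 :=
  Nat.sInf_eq_zero.2 (Or.inl rfl)

lemma height_eq_height_kepler_add_one {σ : MusInt} (hσ : σ ≠ octave) :
    height σ = height (kepler σ) + 1 := by
  refine IsLeast.csInf_eq ⟨Nat.sInf_mem (exists_iterate_kepler_eq_octave (kepler σ)), ?_⟩
  rintro (_ | ℓ) hℓ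
  · exact absurd hℓ hσ
  · exact Nat.succ_le_succ (Nat.sInf_le hℓ)

lemma euclideanConsonant_iff_of_ne_octave {σ : MusInt} (hσ : σ ≠ octave) :
    EuclideanConsonant σ ↔ IsEuclidean (nVal σ) ∧ EuclideanConsonant (kepler σ) := by
  rw [EuclideanConsonant, EuclideanConsonant, height_eq_height_kepler_add_one hσ]
  constructor
  · intro h
    exact ⟨h 0 (Nat.zero_le _), fun j hj => h (j + 1) (by omega)⟩
  · rintro ⟨h₀, h⟩ (_ | j) hj
    exacts [h₀, h j (by omega)]

lemma isEuclidean_iff {n : ℕ} : IsEuclidean n ↔ 1 < n ∧ n ∣ 15 * 2 ^ n := by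
  refine and_congr_right fun hn => ⟨?_, fun h => ?_⟩
  · rintro ⟨k, l, m, hl, hm, rfl⟩
    have hk : 2 ^ k ∣ 2 ^ (2 ^ k * 3 ^ l * 5 ^ m) := Nat.pow_dvd_pow 2 <|
      (Nat.lt_two_pow_self).le.trans (Nat.le_mul_of_pos_right _ (by positivity)) |>.trans
        (Nat.le_mul_of_pos_right _ (by positivity))
    have h15 : 3 ^ l * 5 ^ m ∣ 15 := by
      rcases hl with rfl | rfl <;> rcases hm with rfl | rfl <;> norm_num
    calc 2 ^ k * 3 ^ l * 5 ^ m = 3 ^ l * 5 ^ m * 2 ^ k := by ring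
      _ ∣ 15 * 2 ^ (2 ^ k * 3 ^ l * 5 ^ m) := mul_dvd_mul h15 hk
  · obtain ⟨y, z, hy, hz, rfl⟩ := Nat.dvd_mul.1 h
    obtain ⟨k, -, rfl⟩ := (Nat.dvd_prime_pow Nat.prime_two).1 hz
    have hy' : y ∈ Nat.divisors 15 := Nat.mem_divisors.2 ⟨hy, by norm_num⟩
    rw [show Nat.divisors 15 = {1, 3, 5, 15} by decide] at hy'
    simp only [Finset.mem_insert, Finset.mem_singleton] at hy'
    rcases hy' with rfl | rfl | rfl | rfl
    exacts [⟨k, 0, 0, by simp⟩, ⟨k, 1, 0, by simp; ring⟩, ⟨k, 0, 1, by simp; ring⟩,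
      ⟨k, 1, 1, by simp; ring⟩]

instance : DecidablePred IsEuclidean := fun _ => decidable_of_iff _ isEuclidean_iff.symm

lemma IsEuclidean.two_pow_mul {n : ℕ} (hn : IsEuclidean n) (s : ℕ) : IsEuclidean (2 ^ s * n) := by
  obtain ⟨h1, k, l, m, hl, hm, rfl⟩ := hn
  exact ⟨h1.trans_le (Nat.le_mul_of_pos_left _ (by positivity)), s + k, l, m, hl, hm, by ring⟩

lemma IsEuclidean.le_fifteen_of_odd {n : ℕ} (hn : IsEuclidean n) (hodd : Odd n) : n ≤ 15 :=
  Nat.le_of_dvd (by norm_num) <|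
    (Nat.Coprime.pow_right n (Nat.coprime_two_right.2 hodd)).dvd_of_dvd_mul_right
      (isEuclidean_iff.1 hn).2

lemma IsEuclidean.pair_mem {m n : ℕ} (hm : IsEuclidean m) (hn : IsEuclidean n) (hmn : m < n)
    (hn2m : n < 2 * m) (hcop : Nat.Coprime n m) :
    (m, n) ∈ ({(2, 3), (3, 4), (3, 5), (4, 5), (5, 6), (5, 8), (8, 15), (15, 16)} :
      Finset (ℕ × ℕ)) := by
  have hn30 : n < 30 := by
    rcases Nat.even_or_odd n with hn_even | hn_odd
    · have hm_odd : Odd m := Nat.not_even_iff_odd.1 fun hm_even => by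
        simpa [hcop] using Nat.dvd_gcd (even_iff_two_dvd.1 hn_even) (even_iff_two_dvd.1 hm_even)
      have := hm.le_fifteen_of_odd hm_odd
      omega
    · have := hn.le_fifteen_of_odd hn_odd
      omega
  have key : ∀ n < 30, ∀ m < n, IsEuclidean m ∧ IsEuclidean n ∧ n < 2 * m ∧ Nat.Coprime n m →
      (m, n) ∈ ({(2, 3), (3, 4), (3, 5), (4, 5), (5, 6), (5, 8), (8, 15), (15, 16)} :
        Finset (ℕ × ℕ)) := by
    decide
  exact key n hn30 m hmn ⟨hm, hn, hn2m, hcop⟩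

lemma ne_octave_of_rep_eq {σ : MusInt} {m n : ℕ} (hrep : rep σ = (m, n)) (hm : m ≠ 1) :
    σ ≠ octave := by
  rintro rfl
  rw [rep_octave, Prod.mk.injEq] at hrep
  exact hm hrep.1.symm

lemma euclideanConsonant_octave : EuclideanConsonant octave := by
  intro j hj
  rw [height_octave, Nat.le_zero] at hj
  subst hj
  rw [Function.iterate_zero_apply, nVal, rep_octave]
  decide

lemma EuclideanConsonant.isEuclidean_nVal {σ : MusInt} (h : EuclideanConsonant σ) :
    IsEuclidean (nVal σ) :=
  h 0 (Nat.zero_le _)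

lemma EuclideanConsonant.kepler {σ : MusInt} (h : EuclideanConsonant σ) (hσ : σ ≠ octave) :
    EuclideanConsonant (kepler σ) :=
  ((euclideanConsonant_iff_of_ne_octave hσ).1 h).2

lemma EuclideanConsonant.isEuclidean_mVal {σ : MusInt} (h : EuclideanConsonant σ)
    (hσ : σ ≠ octave) : IsEuclidean (mVal σ) := by
  obtain ⟨s, hs⟩ := exists_mVal_eq_two_pow_mul_nVal_kepler hσ
  exact hs ▸ (h.kepler hσ).isEuclidean_nVal.two_pow_mul s

lemma EuclideanConsonant.rep_mem {σ : MusInt} (h : EuclideanConsonant σ) (hσ : σ ≠ octave) :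
    rep σ ∈ ({(2, 3), (3, 4), (3, 5), (4, 5), (5, 6), (5, 8), (8, 15), (15, 16)} :
      Finset (ℕ × ℕ)) :=
  (h.isEuclidean_mVal hσ).pair_mem h.isEuclidean_nVal (mVal_lt_nVal σ) (nVal_lt_two_mul_mVal hσ)
    (coprime_nVal_mVal σ)

lemma EuclideanConsonant.rep_ne_eight_fifteen {σ : MusInt} (h : EuclideanConsonant σ) :
    rep σ ≠ (8, 15) := by
  intro hrep
  have hK := rep_kepler_eq hrep 0 (u := 7) (w := 8) (by decide) (by decide) (by decide) (by decide)
  have h7 := (h.kepler (ne_octave_of_rep_eq hrep (by decide))).isEuclidean_mVal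
    (ne_octave_of_rep_eq hK (by decide))
  rw [mVal, hK] at h7
  exact absurd h7 (by decide)

lemma EuclideanConsonant.rep_ne_fifteen_sixteen {σ : MusInt} (h : EuclideanConsonant σ) :
    rep σ ≠ (15, 16) := fun hrep =>
  (h.kepler (ne_octave_of_rep_eq hrep (by decide))).rep_ne_eight_fifteen <|
    rep_kepler_eq hrep 3 (by decide) (by decide) (by decide) (by decide)

lemma euclideanConsonant_of_rep_kepler_eq {σ : MusInt} {m n u w : ℕ} (hrep : rep σ = (m, n))
    (a : ℕ) (h : m ≠ 1 ∧ IsEuclidean n ∧ u < w ∧ w ≤ 2 * u ∧ Nat.Coprime w u ∧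
      u * m = 2 ^ a * (n - m) * w)
    (hK : ∀ τ, rep τ = (u, w) → EuclideanConsonant τ) : EuclideanConsonant σ := by
  obtain ⟨hm, hn, huw, hw, hcop, hval⟩ := h
  have hσ := ne_octave_of_rep_eq hrep hm
  rw [euclideanConsonant_iff_of_ne_octave hσ, nVal, hrep]
  exact ⟨hn, hK _ (rep_kepler_eq hrep a huw hw hcop hval)⟩

lemma euclideanConsonant_iff_rep_mem {σ : MusInt} : EuclideanConsonant σ ↔
    rep σ ∈ ({(5, 6), (4, 5), (3, 4), (2, 3), (5, 8), (3, 5), (1, 2)} : Finset (ℕ × ℕ)) := by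
  constructor
  · intro h
    by_cases hσ : σ = octave
    · simp [hσ, rep_octave]
    have h8 := h.rep_mem hσ
    have h15 := h.rep_ne_eight_fifteen
    have h16 := h.rep_ne_fifteen_sixteen
    simp only [Finset.mem_insert, Finset.mem_singleton] at h8 ⊢
    tauto
  · have c12 : ∀ τ, rep τ = (1, 2) → EuclideanConsonant τ := fun τ h =>
      rep_injective (h.trans rep_octave.symm) ▸ euclideanConsonant_octave
    have c23 : ∀ τ, rep τ = (2, 3) → EuclideanConsonant τ := fun τ h =>
      euclideanConsonant_of_rep_kepler_eq h 0 (by decide) c12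
    have c45 : ∀ τ, rep τ = (4, 5) → EuclideanConsonant τ := fun τ h =>
      euclideanConsonant_of_rep_kepler_eq h 1 (by decide) c12
    have c34 : ∀ τ, rep τ = (3, 4) → EuclideanConsonant τ := fun τ h =>
      euclideanConsonant_of_rep_kepler_eq h 1 (by decide) c23
    have c35 : ∀ τ, rep τ = (3, 5) → EuclideanConsonant τ := fun τ h =>
      euclideanConsonant_of_rep_kepler_eq h 0 (by decide) c23
    have c56 : ∀ τ, rep τ = (5, 6) → EuclideanConsonant τ := fun τ h =>
      euclideanConsonant_of_rep_kepler_eq h 2 (by decide) c45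
    have c58 : ∀ τ, rep τ = (5, 8) → EuclideanConsonant τ := fun τ h =>
      euclideanConsonant_of_rep_kepler_eq h 0 (by decide) c35
    simp only [Finset.mem_insert, Finset.mem_singleton]
    rintro (h | h | h | h | h | h | h)
    exacts [c56 σ h, c45 σ h, c34 σ h, c23 σ h, c58 σ h, c35 σ h, c12 σ h]

lemma eq_cls_iff_rep_eq {σ : MusInt} {q : ℚ} {hq : 0 < q} (m n : ℕ)
    (h : m < n ∧ n ≤ 2 * m ∧ Nat.Coprime n m ∧ (m : ℚ) / n = q) :
    σ = cls q hq ↔ rep σ = (m, n) := by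
  obtain ⟨hmn, hn, hcop, hval⟩ := h
  have hrep : rep (cls q hq) = (m, n) := rep_cls_eq hq hmn hn hcop ⟨0, by simp [hval]⟩
  exact ⟨fun h => h ▸ hrep, fun h => rep_injective (h.trans hrep.symm)⟩

/-- there are precisely seven Euclidean consonants: the minor third
`[5/6]`, major third `[4/5]`, fourth `[3/4]`, fifth `[2/3]`, minor sixth `[5/8]`,
major sixth `[3/5]`, and the octave `[1/2]`. -/
theorem euclidean_consonants :
    {σ : MusInt | EuclideanConsonant σ} =
      {cls (5/6) (by norm_num), cls (4/5) (by norm_num), cls (3/4) (by norm_num),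
       cls (2/3) (by norm_num), cls (5/8) (by norm_num), cls (3/5) (by norm_num),
       cls (1/2) (by norm_num)} := by
  ext σ
  rw [Set.mem_ofPred_eq, euclideanConsonant_iff_rep_mem]
  simp only [Set.mem_insert_iff, Set.mem_singleton_iff, Finset.mem_insert, Finset.mem_singleton,
    eq_cls_iff_rep_eq (q := 5 / 6) 5 6 (by norm_num),
    eq_cls_iff_rep_eq (q := 4 / 5) 4 5 (by norm_num),
    eq_cls_iff_rep_eq (q := 3 / 4) 3 4 (by norm_num),
    eq_cls_iff_rep_eq (q := 2 / 3) 2 3 (by norm_num),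
    eq_cls_iff_rep_eq (q := 5 / 8) 5 8 (by norm_num),
    eq_cls_iff_rep_eq (q := 3 / 5) 3 5 (by norm_num),
    eq_cls_iff_rep_eq (q := 1 / 2) 1 2 (by norm_num)]
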